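/- For a region R and a zone Z: R ⊆ a_LU(Z) if and only if a_LU⁻¹(R) ∩ Z ≠ ∅, where a_LU⁻¹(R) = {v' : ∃ v ∈ R, v ⊑_LU v'}. -/

import Mathlib

/-- The LU-preorder on (nonnegative real) clock valuations. -/
def simLU {X : Type*} (L U : X → ℕ) (v v' : X → ℝ) : Prop :=
  ∀ x, (v' x < v x → (L x : ℝ) < v' x) ∧ (v x < v' x → (U x : ℝ) < v x)

/-- a_LU(Z) = {v : ∃ v' ∈ Z, v ⊑_LU v'}. -/
def aLU {X : Type*} (L U : X → ℕ) (Z : Set (X → ℝ)) : Set (X → ℝ) :=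
  {v | ∃ v' ∈ Z, simLU L U v v'}

/-- a_LU⁻¹(W) = {v' : ∃ v ∈ W, v ⊑_LU v'}. -/
def aLUinv {X : Type*} (L U : X → ℕ) (W : Set (X → ℝ)) : Set (X → ℝ) :=
  {v' | ∃ v ∈ W, simLU L U v v'}

/-- Region equivalence with respect to a bound function α. -/
def regEquiv {X : Type*} (α : X → ℕ) (v w : X → ℝ) : Prop :=
  (∀ x, ((α x : ℝ) < v x ∧ (α x : ℝ) < w x) ∨
    (⌊v x⌋ = ⌊w x⌋ ∧ (Int.fract (v x) = 0 ↔ Int.fract (w x) = 0))) ∧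
  (∀ x y, v x ≤ (α x : ℝ) → v y ≤ (α y : ℝ) →
    (Int.fract (v x) < Int.fract (v y) ↔ Int.fract (w x) < Int.fract (w y)))

/-- An atomic zone constraint: `(i, j, strict, c)` means `ev(j) − ev(i) ◁ c`,
with `ev(none) = 0`, `ev(some x) = v(x)`. -/
def csat {X : Type*} (v : X → ℝ) : Option X × Option X × Bool × ℤ → Prop :=
  fun p =>
    let ev : Option X → ℝ := fun o => o.elim 0 v
    if p.2.2.1 then ev p.2.1 - ev p.1 < (p.2.2.2 : ℝ) else ev p.2.1 - ev p.1 ≤ (p.2.2.2 : ℝ)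

/-- A zone is a set of valuations defined by a finite conjunction of difference constraints. -/
def IsZone {X : Type*} (Z : Set (X → ℝ)) : Prop :=
  ∃ l : List (Option X × Option X × Bool × ℤ), Z = {v | ∀ cst ∈ l, csat v cst}

/-!
Region-equivalent valuations `v ∼ w` are related by a strictly monotone lift `ψ : ℝ → ℝ` of a
degree-one circle map with `ψ 0 = 0` and `ψ (v x) = w x` on every clock below its bound: interpolate
the fractional parts monotonically and extend periodically. Such a `ψ` preserves every difference
constraint with an integer constant, hence every zone, and it transports `v ⊑_LU v'` to
`w ⊑_LU ψ ∘ v'`. So `a_LU(Z)` is a union of regions, and a single witness `v ⊑_LU v' ∈ Z` for one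
point of `R` suffices.
-/

open Function Filter Topology

theorem exists_strictMono_interpolating {ι : Type*} [Finite ι] {a b : ι → ℝ}
    (h : ∀ i j, a i < a j ↔ b i < b j) : ∃ g : ℝ → ℝ, StrictMono g ∧ ∀ i, g (a i) = b i := by
  -- Subtracting a small enough slope `δ` keeps the data monotone; extend the result
  -- monotonically and add the slope back.
  have hδ : ∀ᶠ δ in 𝓝[>] (0 : ℝ), ∀ i j, a i < a j → δ * (a j - a i) < b j - b i := by
    simp only [eventually_all]
    intro i j hij
    have hlim : Tendsto (fun δ : ℝ => δ * (a j - a i)) (𝓝[>] 0) (𝓝 0) :=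
      ((continuous_mul_const _).tendsto' 0 0 (zero_mul _)).mono_left nhdsWithin_le_nhds
    exact hlim.eventually_lt_const (sub_pos.2 ((h i j).1 hij))
  obtain ⟨δ, hslope, hδpos⟩ := (hδ.and self_mem_nhdsWithin).exists
  set c : ι → ℝ := fun i => b i - δ * a i
  have hc : ∀ i j, a i ≤ a j → c i ≤ c j := by
    intro i j hij
    rcases hij.lt_or_eq with hlt | heq
    · have := hslope i j hlt
      simp only [c]
      linarith
    · have hb : b i = b j := le_antisymm (not_lt.1 fun hlt => ((h j i).2 hlt).ne' heq)
        (not_lt.1 fun hlt => ((h i j).2 hlt).ne heq)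
      simp only [c, hb, heq, le_refl]
  have hfactor : c.FactorsThrough a := fun i j hij => le_antisymm (hc i j hij.le) (hc j i hij.ge)
  have hmono : MonotoneOn (extend a c 0) (Set.range a) := by
    rintro _ ⟨i, rfl⟩ _ ⟨j, rfl⟩ hij
    rw [hfactor.extend_apply, hfactor.extend_apply]
    exact hc i j hij
  have hfin : (extend a c 0 '' Set.range a).Finite := (Set.finite_range a).image _
  obtain ⟨G, hG, hGc⟩ := hmono.exists_monotone_extension hfin.bddBelow hfin.bddAbove
  refine ⟨fun t => G t + δ * t, hG.add_strictMono (strictMono_mul_left_of_pos hδpos), fun i => ?_⟩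
  simp only [← hGc ⟨i, rfl⟩, hfactor.extend_apply, c, sub_add_cancel]

theorem strictMono_floor_add_comp_fract {g : ℝ → ℝ} (hg : StrictMono g) (h0 : g 0 = 0)
    (h1 : g 1 = 1) : StrictMono fun t : ℝ => ⌊t⌋ + g (Int.fract t) := by
  have hg_nonneg (t : ℝ) : 0 ≤ g (Int.fract t) := h0 ▸ hg.monotone (Int.fract_nonneg t)
  have hg_lt_one (t : ℝ) : g (Int.fract t) < 1 := h1 ▸ hg (Int.fract_lt_one t)
  intro s t hst
  rcases (Int.floor_mono hst.le).lt_or_eq with hfl | hfl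
  · have : (⌊s⌋ : ℝ) + 1 ≤ ⌊t⌋ := by exact_mod_cast hfl
    linarith [hg_lt_one s, hg_nonneg t]
  · have hfract : Int.fract s < Int.fract t := by
      rw [← Int.self_sub_floor, ← Int.self_sub_floor, hfl]
      linarith
    simp only [hfl]
    exact add_lt_add_right (hg hfract) _

theorem Int.ceil_eq_ceil_of_floor_eq {R : Type*} [Ring R] [LinearOrder R] [IsOrderedRing R]
    [FloorRing R] {a b : R} (hfloor : ⌊a⌋ = ⌊b⌋) (hfract : fract a = 0 ↔ fract b = 0) :
    ⌈a⌉ = ⌈b⌉ := by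
  have key (c : R) : ⌈c⌉ = if fract c = 0 then ⌊c⌋ else ⌊c⌋ + 1 := by
    split_ifs with hc
    · obtain ⟨k, rfl⟩ := fract_eq_zero_iff.1 hc
      simp
    · exact (ceil_eq_floor_add_one_iff_notMem c).2 fun hm => hc (fract_eq_zero_iff.2 hm)
  simp only [key, hfloor, hfract]

theorem natCast_lt_iff_of_floor_eq {a b : ℝ} (hfloor : ⌊a⌋ = ⌊b⌋)
    (hfract : Int.fract a = 0 ↔ Int.fract b = 0) (n : ℕ) : (n : ℝ) < a ↔ (n : ℝ) < b := by
  have key (c : ℝ) : (n : ℝ) < c ↔ (n : ℤ) < ⌈c⌉ := by rw [Int.lt_ceil, Int.cast_natCast]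
  rw [key, key, Int.ceil_eq_ceil_of_floor_eq hfloor hfract]

section Regions

variable {X : Type*} {α : X → ℕ}

theorem regEquiv_bound_lt_iff {v w : X → ℝ} (h : regEquiv α v w) (x : X) :
    (α x : ℝ) < v x ↔ (α x : ℝ) < w x := by
  rcases h.1 x with ⟨hv, hw⟩ | ⟨hfloor, hfract⟩
  · exact iff_of_true hv hw
  · exact natCast_lt_iff_of_floor_eq hfloor hfract _

theorem regEquiv_le_bound_iff {v w : X → ℝ} (h : regEquiv α v w) (x : X) :
    v x ≤ α x ↔ w x ≤ α x := by
  simpa only [not_lt] using (regEquiv_bound_lt_iff h x).not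

theorem regEquiv_equivalence : Equivalence (regEquiv (X := X) α) where
  refl _ := ⟨fun _ => Or.inr ⟨rfl, Iff.rfl⟩, fun _ _ _ _ => Iff.rfl⟩
  symm h := ⟨fun x => (h.1 x).imp And.symm fun hc => ⟨hc.1.symm, hc.2.symm⟩,
    fun x y hx hy =>
      (h.2 x y ((regEquiv_le_bound_iff h x).2 hx) ((regEquiv_le_bound_iff h y).2 hy)).symm⟩
  trans {u v w} h₁ h₂ := by
    refine ⟨fun x => ?_, fun x y hx hy => (h₁.2 x y hx hy).trans
      (h₂.2 x y ((regEquiv_le_bound_iff h₁ x).1 hx) ((regEquiv_le_bound_iff h₁ y).1 hy))⟩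
    by_cases hu : (α x : ℝ) < u x
    · exact Or.inl ⟨hu, (regEquiv_bound_lt_iff h₂ x).1 ((regEquiv_bound_lt_iff h₁ x).1 hu)⟩
    · obtain ⟨hfloor₁, hfract₁⟩ := (h₁.1 x).resolve_left fun hc => hu hc.1
      obtain ⟨hfloor₂, hfract₂⟩ := (h₂.1 x).resolve_left fun hc =>
        hu ((regEquiv_bound_lt_iff h₁ x).2 hc.1)
      exact Or.inr ⟨hfloor₁.trans hfloor₂, hfract₁.trans hfract₂⟩

theorem regEquiv.exists_circleDeg1Lift [Finite X] {v w : X → ℝ} (h : regEquiv α v w) :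
    ∃ ψ : CircleDeg1Lift, StrictMono ψ ∧ ψ 0 = 0 ∧ ∀ x, v x ≤ α x → ψ (v x) = w x := by
  let B := {x // v x ≤ α x}
  have hcell (x : B) : ⌊v x⌋ = ⌊w x⌋ ∧ (Int.fract (v x) = 0 ↔ Int.fract (w x) = 0) :=
    (h.1 x).resolve_left fun hc => not_lt.2 x.2 hc.1
  have hpos (x : B) : 0 < Int.fract (v x) ↔ 0 < Int.fract (w x) := by
    simpa only [(Int.fract_nonneg _).lt_iff_ne, ne_comm] using (hcell x).2.not
  -- the endpoints `0 ↦ 0` and `1 ↦ 1` make `⌊t⌋ + g (fract t)` monotone across integers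
  let a : Fin 2 ⊕ B → ℝ := Sum.elim (fun k => (k : ℝ)) fun x => Int.fract (v x)
  let b : Fin 2 ⊕ B → ℝ := Sum.elim (fun k => (k : ℝ)) fun x => Int.fract (w x)
  have hab : ∀ i j, a i < a j ↔ b i < b j := by
    rintro (k | x) (l | y)
    · rfl
    · fin_cases k
      · simpa [a, b] using hpos y
      · exact iff_of_false (by simpa [a] using (Int.fract_lt_one _).le)
          (by simpa [b] using (Int.fract_lt_one _).le)
    · fin_cases l
      · exact iff_of_false (by simp [a]) (by simp [b])
      · simp [a, b, Int.fract_lt_one]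
    · exact h.2 x y x.2 y.2
  obtain ⟨g, hg, hgab⟩ := exists_strictMono_interpolating hab
  have hg0 : g 0 = 0 := by simpa [a, b] using hgab (.inl 0)
  have hg1 : g 1 = 1 := by simpa [a, b] using hgab (.inl 1)
  have hψ := strictMono_floor_add_comp_fract hg hg0 hg1
  refine ⟨⟨⟨_, hψ.monotone⟩, fun t => ?_⟩, hψ, by simp [hg0], fun x hx => ?_⟩
  · simp only [Int.floor_add_one, Int.fract_add_one, Int.cast_add, Int.cast_one]
    ring
  · change (⌊v x⌋ : ℝ) + g (Int.fract (v x)) = w x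
    rw [(hcell ⟨x, hx⟩).1, show g (Int.fract (v x)) = Int.fract (w x) from hgab (.inr ⟨x, hx⟩),
      Int.floor_add_fract]

end Regions

namespace CircleDeg1Lift

variable {ψ : CircleDeg1Lift}

theorem map_natCast_of_map_zero (h0 : ψ 0 = 0) (n : ℕ) : ψ n = n := by
  simpa [h0] using ψ.map_add_nat 0 n

theorem sub_lt_intCast_iff (hψ : StrictMono ψ) (a b : ℝ) (n : ℤ) :
    ψ b - ψ a < n ↔ b - a < n := by
  rw [sub_lt_iff_lt_add', ← map_add_int, hψ.lt_iff_lt, sub_lt_iff_lt_add']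

theorem sub_le_intCast_iff (hψ : StrictMono ψ) (a b : ℝ) (n : ℤ) :
    ψ b - ψ a ≤ n ↔ b - a ≤ n := by
  rw [sub_le_iff_le_add', ← map_add_int, hψ.le_iff_le, sub_le_iff_le_add']

end CircleDeg1Lift

section Zones

variable {X : Type*} {ψ : CircleDeg1Lift}

theorem csat_comp_iff (hψ : StrictMono ψ) (h0 : ψ 0 = 0) (v : X → ℝ)
    (c : Option X × Option X × Bool × ℤ) : csat (ψ ∘ v) c ↔ csat v c := by
  obtain ⟨i, j, strict, n⟩ := c
  have hev (o : Option X) : o.elim 0 (ψ ∘ v) = ψ (o.elim 0 v) := by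
    cases o <;> simp [h0]
  cases strict <;>
    simp only [csat, hev, Bool.false_eq_true, if_true, if_false,
      CircleDeg1Lift.sub_lt_intCast_iff hψ, CircleDeg1Lift.sub_le_intCast_iff hψ]

theorem IsZone.comp_mem {Z : Set (X → ℝ)} (hZ : IsZone Z) (hψ : StrictMono ψ) (h0 : ψ 0 = 0)
    {v : X → ℝ} (hv : v ∈ Z) : ψ ∘ v ∈ Z := by
  obtain ⟨l, rfl⟩ := hZ
  exact fun c hc => (csat_comp_iff hψ h0 v c).2 (hv c hc)

end Zones

section Abstraction

variable {X : Type*} {L U α : X → ℕ}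

theorem simLU_comp (hL : ∀ x, L x ≤ α x) (hU : ∀ x, U x ≤ α x) {ψ : CircleDeg1Lift}
    (hψ : StrictMono ψ) (h0 : ψ 0 = 0) {v w v' : X → ℝ}
    (hψv : ∀ x, v x ≤ α x → ψ (v x) = w x) (hw : ∀ x, (α x : ℝ) < v x → (α x : ℝ) < w x)
    (h : simLU L U v v') : simLU L U w (ψ ∘ v') := by
  have hψn := ψ.map_natCast_of_map_zero h0
  intro x
  obtain ⟨hL', hU'⟩ := h x
  by_cases hx : v x ≤ α x
  · rw [← hψv x hx, comp_apply, hψ.lt_iff_lt, hψ.lt_iff_lt]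
    exact ⟨fun hlt => hψn (L x) ▸ hψ (hL' hlt), fun hlt => hψn (U x) ▸ hψ (hU' hlt)⟩
  · rw [not_le] at hx
    refine ⟨fun _ => ?_, fun _ => (Nat.cast_le.2 (hU x)).trans_lt (hw x hx)⟩
    rw [comp_apply, ← hψn, hψ.lt_iff_lt]
    by_cases hv' : v' x < v x
    · exact hL' hv'
    · exact (Nat.cast_le.2 (hL x)).trans_lt (hx.trans_le (not_lt.1 hv'))

theorem mem_aLU_of_regEquiv [Finite X] {Z : Set (X → ℝ)} (hZ : IsZone Z) {v w : X → ℝ}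
    (h : regEquiv (fun x => max (L x) (U x)) v w) (hv : v ∈ aLU L U Z) : w ∈ aLU L U Z := by
  obtain ⟨v', hv'Z, hsim⟩ := hv
  obtain ⟨ψ, hψ, h0, hψv⟩ := h.exists_circleDeg1Lift
  exact ⟨ψ ∘ v', hZ.comp_mem hψ h0 hv'Z, simLU_comp (fun x => le_max_left _ _)
    (fun x => le_max_right _ _) hψ h0 hψv (fun x => (regEquiv_bound_lt_iff h x).1) hsim⟩

end Abstraction

/-- For a region R and a zone Z: R ⊆ a_LU(Z) iff a_LU⁻¹(R) ∩ Z ≠ ∅.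
Here R is the region (equivalence class w.r.t. bounds α(x) = max(L(x),U(x)))
of some nonnegative valuation v₀. -/
theorem region_incl_aLU_iff {X : Type*} [Fintype X] (L U : X → ℕ)
    (Z : Set (X → ℝ)) (hZ : IsZone Z)
    (v₀ : X → ℝ) (h₀ : ∀ x, 0 ≤ v₀ x)
    (R : Set (X → ℝ))
    (hR : R = {v | (∀ x, 0 ≤ v x) ∧ regEquiv (fun x => max (L x) (U x)) v₀ v}) :
    R ⊆ aLU L U Z ↔ (aLUinv L U R ∩ Z).Nonempty := by
  subst hR
  have hv₀ : v₀ ∈ {v | (∀ x, 0 ≤ v x) ∧ regEquiv (fun x => max (L x) (U x)) v₀ v} :=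
    ⟨h₀, regEquiv_equivalence.refl v₀⟩
  constructor
  · intro hsub
    obtain ⟨v', hv'Z, hsim⟩ := hsub hv₀
    exact ⟨v', ⟨v₀, hv₀, hsim⟩, hv'Z⟩
  · rintro ⟨v', ⟨v, ⟨-, hv⟩, hsim⟩, hv'Z⟩ w ⟨-, hw⟩
    exact mem_aLU_of_regEquiv hZ (regEquiv_equivalence.trans (regEquiv_equivalence.symm hv) hw)
      ⟨v', hv'Z, hsim⟩
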